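/- arXiv:2207.07800 — 5 statements merged into one kernel-verified Lean document; each statement's English description precedes it below -/
import Mathlib

section
/- For every finite Sidon set A of integers with |A| = k and every positive integer T, the diameter satisfies max A − min A ≥ k²T/(T + k − 1) − T (the Erdős–Turán Sidon set inequality). -/
/-- A finite set of integers is Sidon if `a + b = c + d` implies `{a,b} = {c,d}`. -/
def IsSidon (A : Finset ℤ) : Prop :=
  ∀ a ∈ A, ∀ b ∈ A, ∀ c ∈ A, ∀ d ∈ A,
    a + b = c + d → (a = c ∧ b = d) ∨ (a = d ∧ b = c)

/-- The set of positive differences of elements of `X`. -/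
def posDiffs (X : Finset ℤ) : Finset ℤ :=
  ((X ×ˢ X).filter (fun p => p.2 < p.1)).image (fun p => p.1 - p.2)

/-!
Slide a window of length `T` over the integers and let `n j` count the elements of `A` in
`[j, j + T)`. The `M - m + T` windows meeting `[m, M] ⊇ A` satisfy `∑ n j = |A| T`, while
`∑ n j ^ 2` counts pairs `(a, b)` with multiplicity `(T - |a - b|)⁺`; since the differences of a
Sidon set are distinct, `∑ n j ^ 2 ≤ |A| T + T (T - 1)`. Cauchy–Schwarz gives
`(|A| T) ^ 2 ≤ (M - m + T) T (|A| + T - 1)`, which rearranges to the bound.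
-/

open Finset

section DoubleCounting

variable {ι α : Type*} (J : Finset ι) (A : Finset α) (p : ι → α → Prop)
  [∀ j a, Decidable (p j a)]

lemma sum_card_filter_comm : ∑ j ∈ J, #{a ∈ A | p j a} = ∑ a ∈ A, #{j ∈ J | p j a} :=
  sum_card_bipartiteAbove_eq_sum_card_bipartiteBelow p

lemma sum_card_filter_sq :
    ∑ j ∈ J, #{a ∈ A | p j a} ^ 2 = ∑ x ∈ A ×ˢ A, #{j ∈ J | p j x.1 ∧ p j x.2} := by
  simp only [sq, ← card_product, ← filter_product]
  exact sum_card_filter_comm J (A ×ˢ A) fun j x => p j x.1 ∧ p j x.2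

end DoubleCounting

noncomputable def window (T : ℕ) (j : ℤ) : Finset ℤ := Ico j (j + T)

lemma mem_window {T : ℕ} {j a : ℤ} : a ∈ window T j ↔ j ≤ a ∧ a < j + T :=
  mem_Ico

lemma card_window (T : ℕ) (j : ℤ) : #(window T j) = T := by simp [window]

lemma card_filter_mem_window_and_mem_window {J : Finset ℤ} {a b : ℤ} (T : ℕ)
    (hJ : Ico (max a b - T + 1) (min a b + 1) ⊆ J) :
    #{j ∈ J | a ∈ window T j ∧ b ∈ window T j} = ((T : ℤ) - |a - b|).toNat := by
  have hfilter :
      {j ∈ J | a ∈ window T j ∧ b ∈ window T j} = Ico (max a b - T + 1) (min a b + 1) := by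
    ext j
    refine ⟨fun hj => ?_, fun hj => mem_filter.2 ⟨hJ hj, ?_⟩⟩
    · simp only [mem_filter, mem_window, mem_Ico] at hj ⊢
      omega
    · simp only [mem_window, mem_Ico] at hj ⊢
      omega
  rw [hfilter, Int.card_Ico, ← max_sub_min_eq_abs']
  congr 1
  ring

lemma sum_Ioo_toNat_sub_abs (T : ℕ) :
    ∑ d ∈ Ioo (-(T : ℤ)) T, ((T : ℤ) - |d|).toNat = T ^ 2 := by
  -- `(T - |d|)⁺` counts the windows containing both `0` and `d`, and each of the `T` windows
  -- containing `0` lies inside `(-T, T)`.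
  have hwin : ∀ d ∈ Ioo (-(T : ℤ)) T, ((T : ℤ) - |d|).toNat
      = #{j ∈ Ioc (-(T : ℤ)) 0 | 0 ∈ window T j ∧ d ∈ window T j} := by
    intro d hd
    rw [card_filter_mem_window_and_mem_window, zero_sub, abs_neg]
    intro j hj
    simp only [mem_Ioo, mem_Ico, mem_Ioc] at hd hj ⊢
    omega
  have hcount : ∀ j ∈ Ioc (-(T : ℤ)) 0,
      #{d ∈ Ioo (-(T : ℤ)) T | 0 ∈ window T j ∧ d ∈ window T j} = T := by
    intro j hj
    convert card_window T j using 2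
    ext d
    simp only [mem_filter, mem_window, mem_Ioo, mem_Ioc] at hj ⊢
    omega
  rw [sum_congr rfl hwin, ← sum_card_filter_comm, sum_congr rfl hcount]
  simp [sq]

lemma IsSidon.injOn_sub_offDiag {A : Finset ℤ} (hS : IsSidon A) :
    Set.InjOn (fun x : ℤ × ℤ => x.1 - x.2) A.offDiag := by
  rintro ⟨a, b⟩ hab ⟨c, d⟩ hcd hsub
  simp only [coe_offDiag, Set.mem_offDiag] at hab hcd
  rcases hS a hab.1 d hcd.2.1 c hcd.1 b hab.2.1 (by simp at hsub; omega)
    with ⟨rfl, rfl⟩ | ⟨rfl, -⟩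
  · rfl
  · exact absurd rfl hab.2.2

lemma IsSidon.sum_offDiag_toNat_sub_abs_le {A : Finset ℤ} (hS : IsSidon A) (T : ℕ) :
    ∑ x ∈ A.offDiag, ((T : ℤ) - |x.1 - x.2|).toNat ≤ T ^ 2 - T := by
  rw [← sum_image (f := fun d => ((T : ℤ) - |d|).toNat) hS.injOn_sub_offDiag]
  calc _ ≤ ∑ d ∈ (Ioo (-(T : ℤ)) T).erase 0, ((T : ℤ) - |d|).toNat := by
        refine sum_le_sum_of_ne_zero fun d hd hd0 => ?_
        obtain ⟨⟨a, b⟩, hab, rfl⟩ := mem_image.1 hd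
        simp only [mem_offDiag] at hab
        simp only [ne_eq, Int.toNat_eq_zero, not_le, sub_pos] at hd0
        simp only [mem_erase, mem_Ioo, sub_ne_zero]
        exact ⟨hab.2.2, abs_lt.1 hd0⟩
    _ = T ^ 2 - T := by
        obtain rfl | hT := T.eq_zero_or_pos
        · simp
        have h0 : (0 : ℤ) ∈ Ioo (-(T : ℤ)) T := by simpa using hT
        rw [← sum_Ioo_toNat_sub_abs, ← add_sum_erase _ _ h0]
        simp

section Windows

variable {A : Finset ℤ} {m M : ℤ} (T : ℕ)

lemma Ico_max_min_subset_Ico {a b : ℤ} (ha : a ∈ Icc m M) (hb : b ∈ Icc m M) :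
    Ico (max a b - T + 1) (min a b + 1) ⊆ Ico (m - T + 1) (M + 1) := by
  intro j hj
  simp only [mem_Icc, mem_Ico] at ha hb hj ⊢
  omega

lemma sum_card_filter_mem_window (hA : A ⊆ Icc m M) :
    ∑ j ∈ Ico (m - T + 1) (M + 1), #{a ∈ A | a ∈ window T j} = #A * T := by
  rw [sum_card_filter_comm, ← smul_eq_mul, ← sum_const]
  refine sum_congr rfl fun a ha => ?_
  simpa using card_filter_mem_window_and_mem_window T
    (Ico_max_min_subset_Ico T (hA ha) (hA ha))

lemma IsSidon.sum_card_filter_mem_window_sq_le (hS : IsSidon A) (hA : A ⊆ Icc m M) :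
    ∑ j ∈ Ico (m - T + 1) (M + 1), #{a ∈ A | a ∈ window T j} ^ 2
      ≤ #A * T + (T ^ 2 - T) := by
  have hpair : ∀ x ∈ A ×ˢ A,
      #{j ∈ Ico (m - T + 1) (M + 1) | x.1 ∈ window T j ∧ x.2 ∈ window T j}
        = ((T : ℤ) - |x.1 - x.2|).toNat := fun x hx =>
    card_filter_mem_window_and_mem_window T
      (Ico_max_min_subset_Ico T (hA (mem_product.1 hx).1) (hA (mem_product.1 hx).2))
  rw [sum_card_filter_sq, sum_congr rfl hpair, ← diag_union_offDiag,
    sum_union (disjoint_diag_offDiag A), sum_diag]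
  simp only [sub_self, abs_zero, sub_zero, Int.toNat_natCast, sum_const, smul_eq_mul]
  exact Nat.add_le_add_left (hS.sum_offDiag_toNat_sub_abs_le T) _

lemma IsSidon.sq_card_mul_le (hS : IsSidon A) (hA : A ⊆ Icc m M) :
    (#A * T) ^ 2 ≤ (M - m + T).toNat * (#A * T + (T ^ 2 - T)) := by
  calc (#A * T) ^ 2 = (∑ j ∈ Ico (m - T + 1) (M + 1), #{a ∈ A | a ∈ window T j}) ^ 2 := by
        rw [sum_card_filter_mem_window T hA]
    _ ≤ #(Ico (m - T + 1) (M + 1)) *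
          ∑ j ∈ Ico (m - T + 1) (M + 1), #{a ∈ A | a ∈ window T j} ^ 2 :=
        sq_sum_le_card_mul_sum_sq
    _ ≤ (M - m + T).toNat * (#A * T + (T ^ 2 - T)) := by
        rw [Int.card_Ico, show M + 1 - (m - T + 1) = M - m + T by ring]
        exact Nat.mul_le_mul_left _ (hS.sum_card_filter_mem_window_sq_le T hA)

end Windows

theorem stmt_6_general (A : Finset ℤ) (hA : IsSidon A) (hne : A.Nonempty)
    (k : ℕ) (hk : A.card = k) (T : ℕ) :
    ((A.max' hne - A.min' hne : ℤ) : ℝ)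
      ≥ (k : ℝ) ^ 2 * T / ((T : ℝ) + (k : ℝ) - 1) - T := by
  have hdiam : 0 ≤ A.max' hne - A.min' hne := sub_nonneg.2 (A.min'_le _ (A.max'_mem hne))
  obtain rfl | hT := T.eq_zero_or_pos
  · simpa using hdiam
  have key := (Nat.cast_le (α := ℤ)).2 <|
    hA.sq_card_mul_le (m := A.min' hne) (M := A.max' hne) T
      fun a ha => mem_Icc.2 ⟨A.min'_le a ha, A.le_max' a ha⟩
  push_cast [hk, Int.toNat_of_nonneg (by omega : 0 ≤ A.max' hne - A.min' hne + T),
    Nat.cast_sub (Nat.le_self_pow two_ne_zero T)] at key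
  have hcancel : (k : ℤ) ^ 2 * T ≤ (A.max' hne - A.min' hne + T) * (T + k - 1) :=
    le_of_mul_le_mul_left (a := (T : ℤ)) (by linear_combination key) (by exact_mod_cast hT)
  have hk1 : (1 : ℝ) ≤ k := by exact_mod_cast hk ▸ hne.card_pos
  have hTR : (0 : ℝ) < T := by exact_mod_cast hT
  rw [ge_iff_le, sub_le_iff_le_add, div_le_iff₀ (by linarith)]
  exact_mod_cast hcancel

theorem stmt_6 (A : Finset ℤ) (hA : IsSidon A) (hne : A.Nonempty)
    (k : ℕ) (hk : A.card = k) (T : ℕ) (hT : 0 < T) :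
    ((A.max' hne - A.min' hne : ℤ) : ℝ)
      ≥ (k : ℝ) ^ 2 * T / ((T : ℝ) + (k : ℝ) - 1) - T :=
  stmt_6_general A hA hne k hk T
end

section
/- Every finite Sidon set A of integers with |A| = k ≥ 1 satisfies max A − min A ≥ k² − 2k^{3/2} + k + √k − 1. -/
lemma sum_distinct_pos (S : Finset ℤ) (h : ∀ x ∈ S, 1 ≤ x) :
    (S.card : ℤ) * (S.card + 1) ≤ 2 * ∑ x ∈ S, x := by
  induction S using Finset.strongInduction with
  | _ S ih =>
    rcases S.eq_empty_or_nonempty with rfl | hS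
    · simp
    · set x := S.max' hS with hxdef
      have hx : x ∈ S := S.max'_mem hS
      have hx1 : 1 ≤ x := h x hx
      have hsub : S ⊆ Finset.Icc 1 x := fun y hy => Finset.mem_Icc.2 ⟨h y hy, S.le_max' y hy⟩
      have hcard : (S.card : ℤ) ≤ x := by
        have h1 := Finset.card_le_card hsub
        rw [Int.card_Icc] at h1
        have : ((x + 1 - 1).toNat : ℤ) = x := by omega
        omega
      have hih := ih (S.erase x) (Finset.erase_ssubset hx)
        (fun y hy => h y (Finset.mem_of_mem_erase hy))
      have hsum : ∑ y ∈ S, y = x + ∑ y ∈ S.erase x, y := (Finset.add_sum_erase _ _ hx).symm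
      have hce : (S.erase x).card = S.card - 1 := Finset.card_erase_of_mem hx
      have hpos : 1 ≤ S.card := Finset.card_pos.2 hS
      have hcast : ((S.erase x).card : ℤ) = (S.card : ℤ) - 1 := by
        rw [hce]; omega
      rw [hcast] at hih
      nlinarith [hih, hcard, hsum]

lemma gauss (m : ℕ) : 2 * ∑ j ∈ Finset.Icc 1 m, (j : ℤ) = (m : ℤ) * (m + 1) := by
  induction m with
  | zero => simp
  | succ p ih =>
    rw [Finset.sum_Icc_succ_top (by omega), mul_add, ih]
    push_cast; ring

lemma lindstrom_core (A : Finset ℤ) (hA : IsSidon A) (hne : A.Nonempty)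
    (k m : ℕ) (hk : A.card = k) (hm1 : 1 ≤ m) (hmk : m + 1 ≤ k) :
    ((∑ j ∈ Finset.Icc 1 m, (k - j : ℕ) : ℤ)) * ((∑ j ∈ Finset.Icc 1 m, (k - j : ℕ) : ℤ) + 1)
      ≤ (m : ℤ) * (m + 1) * (A.max' hne - A.min' hne) := by
  have hk1 : 1 ≤ k := by omega
  set n : ℤ := A.max' hne - A.min' hne with hn
  -- the sorted sequence
  set f := A.orderEmbOfFin hk with hf
  set b : ℕ → ℤ := fun i => f ⟨min i (k-1), by omega⟩ with hb
  have hbA : ∀ i, b i ∈ A := fun i => A.orderEmbOfFin_mem hk _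
  have hlt : ∀ {i i' : ℕ}, i < i' → i' < k → b i < b i' := by
    intro i i' h h'
    have : (⟨min i (k-1), by omega⟩ : Fin k) < ⟨min i' (k-1), by omega⟩ := by
      simp only [Fin.mk_lt_mk]; omega
    exact (A.orderEmbOfFin hk).strictMono this
  have hbinj : ∀ {i i' : ℕ}, i < k → i' < k → b i = b i' → i = i' := by
    intro i i' hi hi' he
    rcases lt_trichotomy i i' with h | h | h
    · exact absurd he (ne_of_lt (hlt h hi'))
    · exact h
    · exact absurd he.symm (ne_of_lt (hlt h hi))
  -- ambient index set
  set D : Finset ((_ : ℕ) × ℕ) :=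
    (Finset.Icc 1 m).sigma (fun j => Finset.range (k - j)) with hD
  set φ : ((_ : ℕ) × ℕ) → ℤ := fun x => b (x.2 + x.1) - b x.2 with hφ
  have hmem : ∀ x ∈ D, x.1 ∈ Finset.Icc 1 m ∧ x.2 ∈ Finset.range (k - x.1) :=
    fun x hx => Finset.mem_sigma.mp hx
  have hbound : ∀ x ∈ D, 1 ≤ x.1 ∧ x.1 ≤ m ∧ x.2 + x.1 < k := by
    intro x hx
    obtain ⟨h1, h2⟩ := hmem x hx
    simp only [Finset.mem_Icc] at h1
    simp only [Finset.mem_range] at h2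
    omega
  have hpos : ∀ x ∈ D, 1 ≤ φ x := by
    intro x hx
    obtain ⟨h1, h2, h3⟩ := hbound x hx
    have := hlt (show x.2 < x.2 + x.1 by omega) h3
    simp only [hφ]; omega
  have hinj : Set.InjOn φ D := by
    intro x hx y hy he
    obtain ⟨hx1, hx2, hx3⟩ := hbound x hx
    obtain ⟨hy1, hy2, hy3⟩ := hbound y hy
    have hsum : b (x.2 + x.1) + b y.2 = b (y.2 + y.1) + b x.2 := by
      simp only [hφ] at he; omega
    rcases hA _ (hbA _) _ (hbA _) _ (hbA _) _ (hbA _) hsum with ⟨e1, e2⟩ | ⟨e1, e2⟩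
    · have hi : y.2 = x.2 := hbinj (by omega) (by omega) e2
      have hj : x.2 + x.1 = y.2 + y.1 := hbinj (by omega) (by omega) e1
      exact Sigma.ext (by omega) (heq_of_eq (by omega))
    · exfalso
      have := hlt (show x.2 < x.2 + x.1 by omega) hx3
      omega
  -- cardinality
  have hcard : D.card = ∑ j ∈ Finset.Icc 1 m, (k - j) := by
    rw [hD, Finset.card_sigma]
    simp
  -- upper bound on the sum
  have hub : ∑ x ∈ D, φ x ≤ (∑ j ∈ Finset.Icc 1 m, (j : ℤ)) * n := by
    rw [hD, Finset.sum_sigma, Finset.sum_mul]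
    apply Finset.sum_le_sum
    intro j hj
    simp only [Finset.mem_Icc] at hj
    have hjk : j ≤ k := by omega
    -- telescope
    have hshift : ∑ i ∈ Finset.range (k - j), b (i + j) = ∑ i ∈ Finset.Ico j k, b i := by
      rw [Finset.sum_Ico_eq_sum_range]
      exact Finset.sum_congr rfl (fun i _ => by rw [Nat.add_comm])
    have e1 : ∑ i ∈ Finset.range j, b i + ∑ i ∈ Finset.Ico j k, b i = ∑ i ∈ Finset.range k, b i :=
      Finset.sum_range_add_sum_Ico _ hjk
    have e2 : ∑ i ∈ Finset.range (k - j), b i + ∑ i ∈ Finset.Ico (k - j) k, b i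
        = ∑ i ∈ Finset.range k, b i := Finset.sum_range_add_sum_Ico _ (by omega)
    have hsum : ∑ i ∈ Finset.range (k - j), φ ⟨j, i⟩
        = ∑ i ∈ Finset.Ico (k - j) k, b i - ∑ i ∈ Finset.range j, b i := by
      simp only [hφ, Finset.sum_sub_distrib]
      rw [hshift]; omega
    rw [hsum]
    have hup : ∑ i ∈ Finset.Ico (k - j) k, b i ≤ (j : ℤ) * A.max' hne := by
      calc ∑ i ∈ Finset.Ico (k - j) k, b i ≤ ∑ _i ∈ Finset.Ico (k - j) k, A.max' hne :=
            Finset.sum_le_sum (fun i _ => A.le_max' _ (hbA i))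
        _ = (j : ℤ) * A.max' hne := by
            rw [Finset.sum_const, Nat.card_Ico]
            have : k - (k - j) = j := by omega
            rw [this]; simp [nsmul_eq_mul]
    have hlo : (j : ℤ) * A.min' hne ≤ ∑ i ∈ Finset.range j, b i := by
      calc (j : ℤ) * A.min' hne = ∑ _i ∈ Finset.range j, A.min' hne := by
            rw [Finset.sum_const]; simp [nsmul_eq_mul]
        _ ≤ ∑ i ∈ Finset.range j, b i := Finset.sum_le_sum (fun i _ => A.min'_le _ (hbA i))
    have : (j:ℤ) * n = (j : ℤ) * A.max' hne - (j:ℤ) * A.min' hne := by rw [hn]; ring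
    omega
  -- Gauss sum
  have hgauss : 2 * ∑ j ∈ Finset.Icc 1 m, (j : ℤ) = (m : ℤ) * (m + 1) := gauss m
  -- lower bound via distinct positive integers
  set E := D.image φ with hE
  have hEcard : (E.card : ℤ) = ((∑ j ∈ Finset.Icc 1 m, (k - j : ℕ) : ℕ) : ℤ) := by
    rw [hE, Finset.card_image_of_injOn hinj, hcard]
  have hEsum : ∑ x ∈ E, x = ∑ x ∈ D, φ x :=
    Finset.sum_image (fun x hx y hy => hinj hx hy)
  have hEpos : ∀ x ∈ E, 1 ≤ x := by
    intro x hx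
    obtain ⟨p, hp, rfl⟩ := Finset.mem_image.mp hx
    exact hpos p hp
  have hlb := sum_distinct_pos E hEpos
  rw [hEsum, hEcard] at hlb
  rw [show (∑ j ∈ Finset.Icc 1 m, ((k - j : ℕ) : ℤ)) = ((∑ j ∈ Finset.Icc 1 m, (k - j : ℕ) : ℕ) : ℤ) from (Nat.cast_sum _ _).symm]
  calc ((∑ j ∈ Finset.Icc 1 m, (k - j : ℕ) : ℕ) : ℤ) * (((∑ j ∈ Finset.Icc 1 m, (k - j : ℕ) : ℕ) : ℤ) + 1)
      ≤ 2 * ∑ x ∈ D, φ x := hlb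
    _ ≤ 2 * ((∑ j ∈ Finset.Icc 1 m, (j : ℤ)) * n) := by linarith
    _ = (m : ℤ) * (m + 1) * n := by rw [← mul_assoc, hgauss]

lemma poly_ineq (m s : ℝ) (hm : 1 ≤ m) (hmint : 0 ≤ (m-1)*(m-2)) (h1 : m ≤ s) (h2 : s ≤ m + 1) :
    4 * (m*(m+1)) * (s^4 - 2*s^3 + s^2 + s - 1)
      ≤ (m*(2*s^2 - m - 1)) * (m*(2*s^2 - m - 1) + 2) := by
  rcases le_or_gt 2 m with h | h
  · nlinarith [mul_nonneg (mul_nonneg (sub_nonneg.2 h1) (sub_nonneg.2 h1)) (sub_nonneg.2 h2 : (0:ℝ) ≤ m + 1 - s), mul_nonneg (sub_nonneg.2 h1) (sub_nonneg.2 h2), mul_nonneg (mul_nonneg (mul_nonneg (sub_nonneg.2 h1) (sub_nonneg.2 h1)) (sub_nonneg.2 h2)) (by linarith : (0:ℝ) ≤ s + 1 - m), mul_nonneg (mul_nonneg (by linarith : (0:ℝ) ≤ m - 1) (mul_self_nonneg (s - m))) (by linarith : (0:ℝ) ≤ m + 1 - s), mul_nonneg (mul_nonneg hmint (by linarith : (0:ℝ)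 ≤ m + 1)) (sub_nonneg.2 h1), mul_nonneg hmint (by linarith : (0:ℝ) ≤ m + 1), mul_nonneg (by linarith : (0:ℝ) ≤ m*m - m + 1) (sub_nonneg.2 h1), sq_nonneg (s - m), sq_nonneg (m + 1 - s)]
  · have hm1 : m = 1 := by nlinarith
    subst hm1
    nlinarith [sq_nonneg (s-1), sq_nonneg (2 - s), mul_nonneg (mul_nonneg (sub_nonneg.2 h1) (sub_nonneg.2 h1)) (sub_nonneg.2 h2 : (0:ℝ) ≤ 1 + 1 - s), mul_nonneg (mul_nonneg (mul_nonneg (sub_nonneg.2 h1) (sub_nonneg.2 h1)) (sub_nonneg.2 h2)) (by linarith : (0:ℝ) ≤ s + 1)]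


theorem stmt_7 (A : Finset ℤ) (hA : IsSidon A) (hne : A.Nonempty)
    (k : ℕ) (hk : A.card = k) (hk1 : 1 ≤ k) :
    ((A.max' hne - A.min' hne : ℤ) : ℝ)
      ≥ (k : ℝ) ^ 2 - 2 * (k : ℝ) ^ ((3 : ℝ) / 2) + (k : ℝ) + Real.sqrt k - 1 := by
  rcases eq_or_lt_of_le hk1 with h1 | hk2
  · -- k = 1
    subst hk
    obtain ⟨a, ha⟩ := Finset.card_eq_one.mp h1.symm
    subst ha
    simp only [Finset.max'_singleton, Finset.min'_singleton, sub_self, Int.cast_zero,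
      Finset.card_singleton]
    norm_num [Real.one_rpow, Real.sqrt_one]
  · -- k ≥ 2
    set m := Nat.sqrt k with hmdef
    have hm1 : 1 ≤ m := by
      have := Nat.sqrt_pos.mpr (show 0 < k by omega)
      omega
    have hmk : m + 1 ≤ k := by
      have := Nat.sqrt_lt_self hk2
      omega
    have hmsq : m * m ≤ k := by
      have h := Nat.sqrt_le' k
      rw [pow_two] at h
      exact h
    have hksq : k < (m + 1) * (m + 1) := by
      have h := Nat.lt_succ_sqrt' k
      rw [pow_two] at h
      exact h
    have hcore := lindstrom_core A hA hne k m hk hm1 hmk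
    set n : ℤ := A.max' hne - A.min' hne with hn
    set T : ℕ := ∑ j ∈ Finset.Icc 1 m, (k - j) with hT
    have hTval : 2 * (T : ℤ) = 2 * m * k - m * (m + 1) := by
      have h1 : (T : ℤ) = ∑ j ∈ Finset.Icc 1 m, ((k : ℤ) - j) := by
        rw [hT, Nat.cast_sum]
        refine Finset.sum_congr rfl (fun j hj => ?_)
        have := (Finset.mem_Icc.mp hj).2
        have hjk : j ≤ k := by omega
        push_cast [Nat.cast_sub hjk]
        ring
      have h2 : 2 * ∑ j ∈ Finset.Icc 1 m, (j : ℤ) = (m : ℤ) * (m + 1) := gauss m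
      rw [h1, Finset.sum_sub_distrib, Finset.sum_const, Nat.card_Icc] at *
      have hcard : (m + 1 - 1 : ℕ) = m := by omega
      rw [hcard] at *
      simp only [nsmul_eq_mul] at *
      linarith
    -- move to the reals
    set s := Real.sqrt k with hs
    have hk0 : (0 : ℝ) ≤ (k : ℝ) := Nat.cast_nonneg k
    have hs2 : s ^ 2 = (k : ℝ) := Real.sq_sqrt hk0
    have hms : (m : ℝ) ≤ s := by
      have hcast : ((m : ℝ)) * (m : ℝ) ≤ (k : ℝ) := by exact_mod_cast hmsq
      have : ((m : ℝ)) ^ 2 ≤ (k : ℝ) := by nlinarith [hcast]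
      calc (m : ℝ) = Real.sqrt ((m : ℝ) ^ 2) := (Real.sqrt_sq (Nat.cast_nonneg m)).symm
        _ ≤ s := Real.sqrt_le_sqrt this
    have hsm : s ≤ (m : ℝ) + 1 := by
      have h1 : (k : ℝ) ≤ ((m : ℝ) + 1) ^ 2 := by
        have : ((k : ℕ) : ℝ) ≤ (((m + 1) * (m + 1) : ℕ) : ℝ) := Nat.cast_le.mpr (le_of_lt hksq)
        push_cast at this
        nlinarith [this]
      calc s ≤ Real.sqrt (((m : ℝ) + 1) ^ 2) := Real.sqrt_le_sqrt h1
        _ = (m : ℝ) + 1 := Real.sqrt_sq (by positivity)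
    have hmint : 0 ≤ ((m : ℝ) - 1) * ((m : ℝ) - 2) := by
      rcases Nat.lt_or_ge m 2 with h | h
      · have : m = 1 := by omega
        simp [this]
      · have : (2 : ℝ) ≤ (m : ℝ) := by exact_mod_cast h
        have hm1' : (1 : ℝ) ≤ (m : ℝ) := by linarith
        nlinarith
    have hm1R : (1 : ℝ) ≤ (m : ℝ) := by exact_mod_cast hm1
    have hpoly := poly_ineq (m : ℝ) s hm1R hmint hms hsm
    -- cast the core inequality
    have hcoreR : (T : ℝ) * ((T : ℝ) + 1) ≤ (m : ℝ) * ((m : ℝ) + 1) * (n : ℝ) := by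
      exact_mod_cast hcore
    have hTR : (m : ℝ) * (2 * s ^ 2 - (m : ℝ) - 1) = 2 * (T : ℝ) := by
      have : (2 : ℝ) * (T : ℝ) = 2 * (m : ℝ) * (k : ℝ) - (m : ℝ) * ((m : ℝ) + 1) := by
        exact_mod_cast hTval
      rw [hs2]
      linarith
    rw [hTR] at hpoly
    have hfinal : s ^ 4 - 2 * s ^ 3 + s ^ 2 + s - 1 ≤ (n : ℝ) := by
      have hpos : (0 : ℝ) < 4 * ((m : ℝ) * ((m : ℝ) + 1)) := by positivity
      have hchain : 4 * ((m : ℝ) * ((m : ℝ) + 1)) * (s ^ 4 - 2 * s ^ 3 + s ^ 2 + s - 1)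
          ≤ 4 * ((m : ℝ) * ((m : ℝ) + 1)) * (n : ℝ) := by nlinarith [hpoly, hcoreR]
      exact le_of_mul_le_mul_left hchain hpos
    have h32 : (k : ℝ) ^ ((3 : ℝ) / 2) = s ^ 3 := by
      rw [hs, Real.sqrt_eq_rpow, ← Real.rpow_natCast ((k : ℝ) ^ ((1 : ℝ) / 2)) 3,
        ← Real.rpow_mul hk0]
      norm_num
    rw [h32]
    have hk2' : (k : ℝ) ^ 2 = s ^ 4 := by rw [← hs2]; ring
    rw [hk2', ← hs2]
    linarith [hfinal]
end

section
/- Let A be a finite Sidon set of integers with min A = 0, max A = n, |A| = k, and let T be a positive integer. Define S(A,T) = ∑_{r=1, r∉A−A}^{T−1} (T − r) and V(A,T) = ∑_{i=1}^{n+T} (A_i − kT/(T+n))², where A_i = |A ∩ [i−T, i)|. Then n = k²T²/(T(T + k − 1) − (2S(A,T) + V(A,T))) − T, provided the denominator is positive. -/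
/-!
Write `A_i` for the number of elements of `A` in the window `[i - T, i)`. Double counting gives
`∑ A_i = kT` and `∑ A_i² = ∑_{a, b ∈ A} max(T - |a - b|, 0)`. Since `A` is Sidon, `(a, b) ↦ a - b`
is injective on pairs with `a > b`, so the off-diagonal part of that sum is
`2 ∑_{r ∈ A - A} max(T - r, 0) = T(T - 1) - 2S`, and `∑ A_i² = T(T + k - 1) - 2S`. As there
are `n + T` windows, `V = ∑ A_i² - (∑ A_i)² / (n + T)`, that is
`T(T + k - 1) - (2S + V) = k²T² / (n + T)`.
-/

open Finset

section Windows

variable {A : Finset ℤ} {lo hi T : ℤ}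

theorem card_filter_window_pair {a b : ℤ} (ha : a ∈ Icc lo hi) (hb : b ∈ Icc lo hi) :
    #{i ∈ Icc (lo + 1) (hi + T) | (i - T ≤ a ∧ a < i) ∧ (i - T ≤ b ∧ b < i)} =
      (T - |a - b|).toNat := by
  rw [mem_Icc] at ha hb
  have hwin : {i ∈ Icc (lo + 1) (hi + T) | (i - T ≤ a ∧ a < i) ∧ (i - T ≤ b ∧ b < i)} =
      Icc (max a b + 1) (min a b + T) := by
    ext i
    simp only [mem_filter, mem_Icc]
    omega
  rw [hwin, Int.card_Icc, ← max_sub_min_eq_abs']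
  congr 1
  ring

theorem sum_card_filter_window (hA : A ⊆ Icc lo hi) :
    ∑ i ∈ Icc (lo + 1) (hi + T), #{m ∈ A | i - T ≤ m ∧ m < i} = #A * T.toNat := by
  have := sum_card_bipartiteAbove_eq_sum_card_bipartiteBelow
    (fun i m => i - T ≤ m ∧ m < i) (s := Icc (lo + 1) (hi + T)) (t := A)
  simp only [bipartiteAbove, bipartiteBelow] at this
  rw [this, ← smul_eq_mul, ← sum_const]
  refine sum_congr rfl fun m hm => ?_
  simpa using card_filter_window_pair (T := T) (hA hm) (hA hm)

theorem sum_sq_card_filter_window (hA : A ⊆ Icc lo hi) :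
    ∑ i ∈ Icc (lo + 1) (hi + T), #{m ∈ A | i - T ≤ m ∧ m < i} ^ 2 =
      ∑ p ∈ A ×ˢ A, (T - |p.1 - p.2|).toNat := by
  have hsq : ∀ i, #{m ∈ A | i - T ≤ m ∧ m < i} ^ 2 =
      #{p ∈ A ×ˢ A | (i - T ≤ p.1 ∧ p.1 < i) ∧ (i - T ≤ p.2 ∧ p.2 < i)} := fun i => by
    rw [sq, ← card_product, ← filter_product (fun m => i - T ≤ m ∧ m < i)]
  have := sum_card_bipartiteAbove_eq_sum_card_bipartiteBelow
    (fun i (p : ℤ × ℤ) => (i - T ≤ p.1 ∧ p.1 < i) ∧ (i - T ≤ p.2 ∧ p.2 < i))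
    (s := Icc (lo + 1) (hi + T)) (t := A ×ˢ A)
  simp only [bipartiteAbove, bipartiteBelow] at this
  rw [funext hsq, this]
  refine sum_congr rfl fun p hp => ?_
  rw [mem_product] at hp
  exact card_filter_window_pair (hA hp.1) (hA hp.2)

end Windows

theorem pos_of_mem_posDiffs {X : Finset ℤ} {r : ℤ} (hr : r ∈ posDiffs X) : 0 < r := by
  obtain ⟨p, hp, rfl⟩ := mem_image.1 hr
  exact sub_pos.2 (mem_filter.1 hp).2

theorem IsSidon.injOn_sub {A : Finset ℤ} (hA : IsSidon A) :
    Set.InjOn (fun p : ℤ × ℤ => p.1 - p.2) ({p ∈ A ×ˢ A | p.2 < p.1} : Finset (ℤ × ℤ)) := by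
  rintro ⟨a, b⟩ hab ⟨c, d⟩ hcd (h : a - b = c - d)
  simp only [mem_coe, mem_filter, mem_product] at hab hcd
  rcases hA a hab.1.1 d hcd.1.2 c hcd.1.1 b hab.1.2 (by omega) with ⟨rfl, rfl⟩ | ⟨rfl, rfl⟩
  · rfl
  · omega

theorem IsSidon.sum_sub_eq {M : Type*} [AddCommMonoid M] {A : Finset ℤ} (hA : IsSidon A)
    (g : ℤ → M) (hg : ∀ d, g (-d) = g d) :
    ∑ p ∈ A ×ˢ A, g (p.1 - p.2) = #A • g 0 + 2 • ∑ r ∈ posDiffs A, g r := by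
  have hdiag : ∑ p ∈ A ×ˢ A with p.1 = p.2, g (p.1 - p.2) = #A • g 0 := by
    rw [← diag_eq_filter, ← diag_card, ← sum_const]
    exact sum_congr rfl fun p hp => by rw [(mem_diag.1 hp).2, sub_self]
  have hupper : ∑ p ∈ A ×ˢ A with p.2 < p.1, g (p.1 - p.2) = ∑ r ∈ posDiffs A, g r :=
    (sum_image hA.injOn_sub).symm
  have hlower : ∑ p ∈ A ×ˢ A with ¬p.1 = p.2 ∧ ¬p.2 < p.1, g (p.1 - p.2) =
      ∑ p ∈ A ×ˢ A with p.2 < p.1, g (p.1 - p.2) := by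
    refine sum_nbij' Prod.swap Prod.swap ?_ ?_ (fun _ _ => rfl) (fun _ _ => rfl) ?_
    · intro p hp
      simp only [mem_filter, mem_product, Prod.fst_swap, Prod.snd_swap] at hp ⊢
      exact ⟨hp.1.symm, by omega⟩
    · intro p hp
      simp only [mem_filter, mem_product, Prod.fst_swap, Prod.snd_swap] at hp ⊢
      exact ⟨hp.1.symm, by omega, by omega⟩
    · intro p _
      rw [Prod.fst_swap, Prod.snd_swap, ← hg, neg_sub]
  have hoff : {p ∈ A ×ˢ A | ¬p.1 = p.2 ∧ p.2 < p.1} = {p ∈ A ×ˢ A | p.2 < p.1} :=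
    filter_congr fun p _ => by omega
  rw [← sum_filter_add_sum_filter_not (A ×ˢ A) (fun p => p.1 = p.2),
    ← sum_filter_add_sum_filter_not {p ∈ A ×ˢ A | ¬p.1 = p.2} (fun p => p.2 < p.1),
    filter_filter, filter_filter, hoff, hlower, hdiag, hupper, two_nsmul]

theorem two_mul_sum_Icc_sub (T : ℤ) (hT : 0 < T) :
    2 * ∑ r ∈ Icc 1 (T - 1), (T - r) = T * (T - 1) := by
  have hrefl : ∑ r ∈ Icc 1 (T - 1), (T - r) = ∑ r ∈ Icc 1 (T - 1), r :=
    sum_nbij' (T - ·) (T - ·) (fun r hr => by simp only [mem_Icc] at hr ⊢; omega)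
      (fun r hr => by simp only [mem_Icc] at hr ⊢; omega)
      (fun r _ => sub_sub_cancel T r) (fun r _ => sub_sub_cancel T r) fun _ _ => rfl
  calc 2 * ∑ r ∈ Icc 1 (T - 1), (T - r)
      = ∑ r ∈ Icc 1 (T - 1), ((T - r) + r) := by rw [sum_add_distrib, ← hrefl, two_mul]
    _ = #(Icc 1 (T - 1)) • T := by simp only [sub_add_cancel, sum_const]
    _ = T * (T - 1) := by
      rw [Int.card_Icc, sub_add_cancel, nsmul_eq_mul, Int.toNat_of_nonneg (by omega), mul_comm]

theorem sum_toNat_sub_add_sum_Icc_ite_not_mem {D : Finset ℤ} (hD : ∀ r ∈ D, 0 < r) (T : ℤ) :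
    ∑ r ∈ D, ((T - r).toNat : ℤ) + ∑ r ∈ Icc 1 (T - 1), (if r ∉ D then T - r else 0) =
      ∑ r ∈ Icc 1 (T - 1), (T - r) := by
  have hD' : ∑ r ∈ D, ((T - r).toNat : ℤ) = ∑ r ∈ Icc 1 (T - 1) with r ∈ D, (T - r) := by
    rw [← sum_filter_of_ne (p := (· ∈ Icc 1 (T - 1))) fun r hr hne => ?_]
    · rw [filter_mem_eq_inter, inter_comm, ← filter_mem_eq_inter]
      refine sum_congr rfl fun r hr => ?_
      rw [mem_filter, mem_Icc] at hr; omega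
    · have := hD r hr
      rw [mem_Icc]
      omega
  rw [hD', ← sum_filter, sum_filter_add_sum_filter_not]

theorem sum_sub_div_card_sq {ι 𝕜 : Type*} [Field 𝕜] (s : Finset ι) (x : ι → 𝕜) :
    ∑ i ∈ s, (x i - (∑ j ∈ s, x j) / #s) ^ 2 = ∑ i ∈ s, x i ^ 2 - (∑ i ∈ s, x i) ^ 2 / #s := by
  have hexp : ∀ c : 𝕜, ∑ i ∈ s, (x i - c) ^ 2 =
      ∑ i ∈ s, x i ^ 2 - 2 * c * ∑ i ∈ s, x i + #s * c ^ 2 := fun c => by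
    simp only [sub_sq, sum_add_distrib, sum_sub_distrib, sum_const, nsmul_eq_mul, ← sum_mul,
      ← mul_sum]
    ring
  rw [hexp]
  by_cases hs : (#s : 𝕜) = 0
  · simp [hs]
  · field_simp
    ring

theorem IsSidon.sum_sq_card_filter_window {A : Finset ℤ} (hA : IsSidon A) {lo hi T : ℤ}
    (hsub : A ⊆ Icc lo hi) (hT : 0 < T) :
    ∑ i ∈ Icc (lo + 1) (hi + T), (#{m ∈ A | i - T ≤ m ∧ m < i} : ℤ) ^ 2 =
      T * (T + #A - 1) - 2 * ∑ r ∈ Icc 1 (T - 1), (if r ∉ posDiffs A then T - r else 0) := by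
  have hcount : ∑ i ∈ Icc (lo + 1) (hi + T), #{m ∈ A | i - T ≤ m ∧ m < i} ^ 2 =
      #A * T.toNat + 2 * ∑ r ∈ posDiffs A, (T - r).toNat := by
    rw [_root_.sum_sq_card_filter_window hsub, hA.sum_sub_eq (fun d => (T - |d|).toNat) (by simp),
      sum_congr rfl fun r hr => by rw [abs_of_pos (pos_of_mem_posDiffs hr)]]
    simp
  have hdiffs :=
    sum_toNat_sub_add_sum_Icc_ite_not_mem (D := posDiffs A) (fun _ => pos_of_mem_posDiffs) T
  have hgauss := two_mul_sum_Icc_sub T hT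
  have hcount' := congrArg (Nat.cast : ℕ → ℤ) hcount
  push_cast [Int.toNat_of_nonneg hT.le] at hcount'
  rw [hcount']
  linear_combination 2 * hdiffs + hgauss

theorem stmt_10_general (A : Finset ℤ) (hA : IsSidon A) (hne : A.Nonempty)
    (k : ℕ) (hk : A.card = k) (n : ℤ) (hmin : A.min' hne = 0) (hmax : A.max' hne = n)
    (T : ℤ) (hT : 0 < T)
    (S V : ℝ)
    (hS : S = ∑ r ∈ Finset.Icc 1 (T - 1),
        (if r ∉ posDiffs A then ((T - r : ℤ) : ℝ) else 0))
    (hV : V = ∑ i ∈ Finset.Icc 1 (n + T),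
        (((A.filter (fun m => i - T ≤ m ∧ m < i)).card : ℝ)
          - (k : ℝ) * T / ((T : ℝ) + n)) ^ 2) :
    (n : ℝ) = (k : ℝ) ^ 2 * (T : ℝ) ^ 2
        / ((T : ℝ) * ((T : ℝ) + (k : ℝ) - 1) - (2 * S + V)) - T := by
  subst hk
  have hsub : A ⊆ Icc 0 n := fun m hm => mem_Icc.2 ⟨hmin ▸ A.min'_le m hm, hmax ▸ A.le_max' m hm⟩
  have hn : 0 ≤ n := hmin ▸ hmax ▸ A.min'_le_max' hne
  have hlen : (#(Icc 1 (n + T)) : ℝ) = T + n := by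
    have : (#(Icc 1 (n + T)) : ℤ) = T + n := by rw [Int.card_Icc]; omega
    exact_mod_cast this
  have hsum : ∑ i ∈ Icc 1 (n + T), (#{m ∈ A | i - T ≤ m ∧ m < i} : ℝ) = #A * T := by
    have := congrArg (Nat.cast : ℕ → ℤ) (sum_card_filter_window (T := T) hsub)
    rw [zero_add] at this
    push_cast [Int.toNat_of_nonneg hT.le] at this
    exact_mod_cast this
  have hsumsq : ∑ i ∈ Icc 1 (n + T), (#{m ∈ A | i - T ≤ m ∧ m < i} : ℝ) ^ 2 =
      T * (T + #A - 1) - 2 * S := by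
    have := hA.sum_sq_card_filter_window hsub hT
    rw [zero_add] at this
    rw [hS]
    exact_mod_cast this
  have hden : T * (T + #A - 1) - (2 * S + V) = ((#A : ℝ) * T) ^ 2 / (T + n) := by
    rw [hV, ← hsum, ← hlen, sum_sub_div_card_sq, hsumsq, hsum, hlen]
    ring
  have hpos : (0 : ℝ) < T + n := by exact_mod_cast (by omega : 0 < T + n)
  have hk : (#A : ℝ) ≠ 0 := by exact_mod_cast hne.card_pos.ne'
  rw [hden]
  field_simp
  ring

theorem stmt_10 (A : Finset ℤ) (hA : IsSidon A) (hne : A.Nonempty)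
    (k : ℕ) (hk : A.card = k) (n : ℤ) (hmin : A.min' hne = 0) (hmax : A.max' hne = n)
    (T : ℤ) (hT : 0 < T)
    (S V : ℝ)
    (hS : S = ∑ r ∈ Finset.Icc 1 (T - 1),
        (if r ∉ posDiffs A then ((T - r : ℤ) : ℝ) else 0))
    (hV : V = ∑ i ∈ Finset.Icc 1 (n + T),
        (((A.filter (fun m => i - T ≤ m ∧ m < i)).card : ℝ)
          - (k : ℝ) * T / ((T : ℝ) + n)) ^ 2)
    (hden : 0 < (T : ℝ) * ((T : ℝ) + (k : ℝ) - 1) - (2 * S + V)) :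
    (n : ℝ) = (k : ℝ) ^ 2 * (T : ℝ) ^ 2
        / ((T : ℝ) * ((T : ℝ) + (k : ℝ) - 1) - (2 * S + V)) - T :=
  stmt_10_general A hA hne k hk n hmin hmax T hT S V hS hV
end

section
/- Let A be a finite Sidon set with min A = 0 and max A = n, let T ≤ n be a positive integer, and define A_j = |A ∩ [j − T, j)| and A_{−j} = |A ∩ [n − j + 1, n + T + 1 − j)|. Then the function j ↦ A_j + A_{−j} is nondecreasing for 1 ≤ j ≤ T, and increases by at most 2 as j increases by 1. -/
theorem stmt_13 (A : Finset ℤ) (hA : IsSidon A) (hne : A.Nonempty)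
    (n : ℤ) (hmin : A.min' hne = 0) (hmax : A.max' hne = n)
    (T : ℤ) (hT : 0 < T) (hTn : T ≤ n)
    (j : ℤ) (hj : 1 ≤ j) (hjT : j + 1 ≤ T) :
    ((A.filter (fun m => j - T ≤ m ∧ m < j)).card
        + (A.filter (fun m => n - j + 1 ≤ m ∧ m < n + T + 1 - j)).card
      ≤ (A.filter (fun m => (j + 1) - T ≤ m ∧ m < j + 1)).card
        + (A.filter (fun m => n - (j + 1) + 1 ≤ m ∧ m < n + T + 1 - (j + 1))).card) ∧
    ((A.filter (fun m => (j + 1) - T ≤ m ∧ m < j + 1)).card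
        + (A.filter (fun m => n - (j + 1) + 1 ≤ m ∧ m < n + T + 1 - (j + 1))).card
      ≤ (A.filter (fun m => j - T ≤ m ∧ m < j)).card
        + (A.filter (fun m => n - j + 1 ≤ m ∧ m < n + T + 1 - j)).card + 2) := by
  have h0 : ∀ m ∈ A, 0 ≤ m := fun m hm => hmin ▸ A.min'_le m hm
  have hn : ∀ m ∈ A, m ≤ n := fun m hm => hmax ▸ A.le_max' m hm
  have e1 : A.filter (fun m => j - T ≤ m ∧ m < j) = A.filter (fun m => m < j) :=
    Finset.filter_congr (fun m hm => by have := h0 m hm; constructor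
                                        · exact fun h => h.2
                                        · exact fun h => ⟨by omega, h⟩)
  have e2 : A.filter (fun m => (j + 1) - T ≤ m ∧ m < j + 1)
      = A.filter (fun m => m < j + 1) :=
    Finset.filter_congr (fun m hm => by have := h0 m hm; constructor
                                        · exact fun h => h.2
                                        · exact fun h => ⟨by omega, h⟩)
  have e3 : A.filter (fun m => n - j + 1 ≤ m ∧ m < n + T + 1 - j)
      = A.filter (fun m => n - j + 1 ≤ m) :=
    Finset.filter_congr (fun m hm => by have := hn m hm; constructor
                                        · exact fun h => h.1
                                        · exact fun h => ⟨h, by omega⟩)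
  have e4 : A.filter (fun m => n - (j + 1) + 1 ≤ m ∧ m < n + T + 1 - (j + 1))
      = A.filter (fun m => n - j ≤ m) :=
    Finset.filter_congr (fun m hm => by have := hn m hm; constructor
                                        · exact fun h => by omega
                                        · exact fun h => by omega)
  rw [e1, e2, e3, e4]
  have hC : A.filter (fun m => m < j) ⊆ A.filter (fun m => m < j + 1) :=
    Finset.monotone_filter_right _ (fun m h => by omega)
  have hB : A.filter (fun m => n - j + 1 ≤ m) ⊆ A.filter (fun m => n - j ≤ m) :=
    Finset.monotone_filter_right _ (fun m h => by omega)
  have hC1 : (A.filter (fun m => m < j + 1)).card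
      ≤ (A.filter (fun m => m < j)).card + 1 := by
    have hsub : A.filter (fun m => m < j + 1) ⊆ insert j (A.filter (fun m => m < j)) := by
      intro m hm
      simp only [Finset.mem_filter, Finset.mem_insert] at hm ⊢
      by_cases h : m = j
      · exact Or.inl h
      · exact Or.inr ⟨hm.1, by omega⟩
    calc (A.filter (fun m => m < j + 1)).card
        ≤ (insert j (A.filter (fun m => m < j))).card := Finset.card_le_card hsub
      _ ≤ _ := Finset.card_insert_le _ _
  have hB1 : (A.filter (fun m => n - j ≤ m)).card
      ≤ (A.filter (fun m => n - j + 1 ≤ m)).card + 1 := by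
    have hsub : A.filter (fun m => n - j ≤ m)
        ⊆ insert (n - j) (A.filter (fun m => n - j + 1 ≤ m)) := by
      intro m hm
      simp only [Finset.mem_filter, Finset.mem_insert] at hm ⊢
      by_cases h : m = n - j
      · exact Or.inl h
      · exact Or.inr ⟨hm.1, by omega⟩
    calc (A.filter (fun m => n - j ≤ m)).card
        ≤ (insert (n - j) (A.filter (fun m => n - j + 1 ≤ m))).card :=
          Finset.card_le_card hsub
      _ ≤ _ := Finset.card_insert_le _ _
  exact ⟨Nat.add_le_add (Finset.card_le_card hC) (Finset.card_le_card hB), by omega⟩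
end

section
/- Let n and T be positive integers with T ≤ n, and let A ⊆ {0, 1, ..., n} be a Sidon set with 0, n ∈ A and |A| = k. If k² T/(T + k − 1) − T > n, then a contradiction follows; equivalently, n ≥ k²T/(T+k−1) − T. -/
open Finset

theorem stmt_18 (n T : ℕ) (hn : 0 < n) (hT : 0 < T) (hTn : T ≤ n)
    (A : Finset ℤ) (hAsub : A ⊆ Finset.Icc 0 (n : ℤ)) (hA : IsSidon A)
    (h0 : (0 : ℤ) ∈ A) (hnA : (n : ℤ) ∈ A) (k : ℕ) (hk : A.card = k) :
    (n : ℝ) ≥ (k : ℝ) ^ 2 * T / ((T : ℝ) + (k : ℝ) - 1) - T := by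
  classical
  have hk1 : 1 ≤ k := by
    rw [← hk]; exact Finset.card_pos.2 ⟨0, h0⟩
  have hbd : ∀ a ∈ A, 0 ≤ a ∧ a ≤ (n : ℤ) := by
    intro a ha
    have := hAsub ha
    simpa [Finset.mem_Icc] using this
  set I : Finset ℤ := Finset.Icc (1 - (T : ℤ)) (n : ℤ) with hI
  have hIcard : I.card = n + T := by
    rw [hI, Int.card_Icc]
    omega
  set f : ℤ → ℕ := fun t => (A.filter (fun a => t ≤ a ∧ a < t + T)).card with hf
  -- each element lies in exactly T windows
  have hwin : ∀ a : ℤ, 0 ≤ a → a ≤ (n : ℤ) →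
      (I.filter (fun t => t ≤ a ∧ a < t + T)).card = T := by
    intro a h1 h2
    have he : I.filter (fun t => t ≤ a ∧ a < t + T) = Finset.Icc (a - T + 1) a := by
      ext t
      simp only [hI, Finset.mem_filter, Finset.mem_Icc]
      omega
    rw [he, Int.card_Icc]
    omega
  -- sum of window counts
  have hsum1 : ∑ t ∈ I, f t = k * T := by
    have : ∑ t ∈ I, f t = ∑ a ∈ A, (I.filter (fun t => t ≤ a ∧ a < t + T)).card := by
      simp only [hf, Finset.card_filter]
      rw [Finset.sum_comm]
    rw [this]
    rw [Finset.sum_congr rfl (fun a ha => hwin a (hbd a ha).1 (hbd a ha).2)]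
    simp [hk, mul_comm]
  -- pair weight
  set w : ℤ → ℤ → ℕ := fun a b =>
    (I.filter (fun t => (t ≤ a ∧ a < t + T) ∧ (t ≤ b ∧ b < t + T))).card with hw
  have hwsymm : ∀ a b, w a b = w b a := by
    intro a b
    simp only [hw]
    congr 1
    apply Finset.filter_congr
    intro t _
    tauto
  have hwdiag : ∀ a ∈ A, w a a = T := by
    intro a ha
    have : I.filter (fun t => (t ≤ a ∧ a < t + T) ∧ (t ≤ a ∧ a < t + T))
        = I.filter (fun t => t ≤ a ∧ a < t + T) := by
      apply Finset.filter_congr; intro t _; tauto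
    rw [hw]
    simp only [this]
    exact hwin a (hbd a ha).1 (hbd a ha).2
  have hwlt : ∀ a b : ℤ, 0 ≤ b → b < a → a ≤ (n : ℤ) →
      w a b = (T - (a - b)).toNat := by
    intro a b h1 h2 h3
    have he : I.filter (fun t => (t ≤ a ∧ a < t + T) ∧ (t ≤ b ∧ b < t + T))
        = Finset.Icc (a - T + 1) b := by
      ext t
      simp only [hI, Finset.mem_filter, Finset.mem_Icc]
      omega
    rw [hw]
    simp only [he]
    rw [Int.card_Icc]
    congr 1
    ring
  -- sum of squares as pair sum
  have hS2 : ∑ t ∈ I, (f t) ^ 2 = ∑ p ∈ A ×ˢ A, w p.1 p.2 := by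
    have step : ∀ t : ℤ, (f t) ^ 2 =
        ∑ p ∈ A ×ˢ A, (if (t ≤ p.1 ∧ p.1 < t + T) ∧ (t ≤ p.2 ∧ p.2 < t + T) then 1 else 0) := by
      intro t
      rw [hf]
      simp only [Finset.card_filter, sq]
      rw [Finset.sum_mul_sum]
      rw [Finset.sum_product]
      apply Finset.sum_congr rfl
      intro a _
      apply Finset.sum_congr rfl
      intro b _
      split_ifs <;> simp_all
    calc ∑ t ∈ I, (f t) ^ 2
        = ∑ t ∈ I, ∑ p ∈ A ×ˢ A,
            (if (t ≤ p.1 ∧ p.1 < t + T) ∧ (t ≤ p.2 ∧ p.2 < t + T) then 1 else 0) :=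
          Finset.sum_congr rfl (fun t _ => step t)
      _ = ∑ p ∈ A ×ˢ A, ∑ t ∈ I,
            (if (t ≤ p.1 ∧ p.1 < t + T) ∧ (t ≤ p.2 ∧ p.2 < t + T) then 1 else 0) :=
          Finset.sum_comm
      _ = ∑ p ∈ A ×ˢ A, w p.1 p.2 := by
          apply Finset.sum_congr rfl
          intro p _
          simp only [hw, Finset.card_filter]
  -- split the pair sum
  have hsplit : ∑ p ∈ A ×ˢ A, w p.1 p.2
      = (∑ p ∈ (A ×ˢ A).filter (fun p => p.1 = p.2), w p.1 p.2)
        + ((∑ p ∈ (A ×ˢ A).filter (fun p => p.2 < p.1), w p.1 p.2)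
          + ∑ p ∈ (A ×ˢ A).filter (fun p => p.1 < p.2), w p.1 p.2) := by
    rw [← Finset.sum_filter_add_sum_filter_not (A ×ˢ A) (fun p => p.1 = p.2)]
    congr 1
    rw [← Finset.sum_filter_add_sum_filter_not
      ((A ×ˢ A).filter (fun p => ¬ p.1 = p.2)) (fun p => p.2 < p.1)]
    congr 1
    · congr 1
      rw [Finset.filter_filter]
      apply Finset.filter_congr
      intro p _
      constructor
      · tauto
      · intro h; exact ⟨by omega, h⟩
    · congr 1
      rw [Finset.filter_filter]
      apply Finset.filter_congr
      intro p _
      constructor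
      · intro h; omega
      · intro h; constructor <;> omega
  -- diagonal sum
  have hdiag : ∑ p ∈ (A ×ˢ A).filter (fun p => p.1 = p.2), w p.1 p.2 = k * T := by
    have himg : (A ×ˢ A).filter (fun p => p.1 = p.2) = A.image (fun a => (a, a)) := by
      ext p
      simp only [Finset.mem_filter, Finset.mem_product, Finset.mem_image]
      constructor
      · rintro ⟨⟨h1, h2⟩, h3⟩
        exact ⟨p.1, h1, by cases p; simp_all⟩
      · rintro ⟨a, ha, rfl⟩
        exact ⟨⟨ha, ha⟩, rfl⟩
    rw [himg, Finset.sum_image (by intro x _ y _ h; exact (Prod.mk.inj h).1)]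
    rw [Finset.sum_congr rfl (fun a ha => hwdiag a ha)]
    simp [hk, mul_comm]
  -- symmetry of the two off-diagonal sums
  have hsymm2 : ∑ p ∈ (A ×ˢ A).filter (fun p => p.1 < p.2), w p.1 p.2
      = ∑ p ∈ (A ×ˢ A).filter (fun p => p.2 < p.1), w p.1 p.2 := by
    apply Finset.sum_nbij' (i := Prod.swap) (j := Prod.swap)
    · intro p hp
      simp only [Finset.mem_filter, Finset.mem_product] at hp ⊢
      exact ⟨⟨hp.1.2, hp.1.1⟩, hp.2⟩
    · intro p hp
      simp only [Finset.mem_filter, Finset.mem_product] at hp ⊢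
      exact ⟨⟨hp.1.2, hp.1.1⟩, hp.2⟩
    · intro p _; simp
    · intro p _; simp
    · intro p _; exact hwsymm p.1 p.2
  -- bound the off-diagonal sum using Sidon
  have hoff : (∑ p ∈ (A ×ˢ A).filter (fun p => p.2 < p.1), w p.1 p.2) * 2 ≤ T * (T - 1) := by
    have hval : ∑ p ∈ (A ×ˢ A).filter (fun p => p.2 < p.1), w p.1 p.2
        = ∑ p ∈ (A ×ˢ A).filter (fun p => p.2 < p.1), ((T : ℤ) - (p.1 - p.2)).toNat := by
      apply Finset.sum_congr rfl
      intro p hp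
      simp only [Finset.mem_filter, Finset.mem_product] at hp
      exact hwlt p.1 p.2 (hbd p.2 hp.1.2).1 hp.2 (hbd p.1 hp.1.1).2
    have hinj : ∀ x ∈ (A ×ˢ A).filter (fun p => p.2 < p.1),
        ∀ y ∈ (A ×ˢ A).filter (fun p => p.2 < p.1),
        x.1 - x.2 = y.1 - y.2 → x = y := by
      intro x hx y hy hxy
      simp only [Finset.mem_filter, Finset.mem_product] at hx hy
      have heq : x.1 + y.2 = y.1 + x.2 := by omega
      rcases hA x.1 hx.1.1 y.2 hy.1.2 y.1 hy.1.1 x.2 hx.1.2 heq with ⟨h1, h2⟩ | ⟨h1, h2⟩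
      · exact Prod.ext h1 h2.symm
      · exfalso; have := hx.2; have := hy.2; omega
    have himg : ∑ d ∈ posDiffs A, ((T : ℤ) - d).toNat
        = ∑ p ∈ (A ×ˢ A).filter (fun p => p.2 < p.1), ((T : ℤ) - (p.1 - p.2)).toNat := by
      rw [posDiffs, Finset.sum_image hinj]
    rw [hval, ← himg]
    -- restrict to diffs ≤ T
    have hres : ∑ d ∈ posDiffs A, ((T : ℤ) - d).toNat
        = ∑ d ∈ (posDiffs A).filter (fun d => d ≤ (T : ℤ)), ((T : ℤ) - d).toNat := by
      rw [eq_comm]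
      apply Finset.sum_subset (Finset.filter_subset _ _)
      intro d hdm hd
      simp only [Finset.mem_filter, not_and] at hd
      have : ¬ d ≤ (T : ℤ) := hd hdm
      omega
    rw [hres]
    have hsub : (posDiffs A).filter (fun d => d ≤ (T : ℤ)) ⊆ Finset.Icc 1 (T : ℤ) := by
      intro d hd
      simp only [Finset.mem_filter, posDiffs, Finset.mem_image, Finset.mem_filter,
        Finset.mem_product] at hd
      obtain ⟨⟨p, hp, rfl⟩, h2⟩ := hd
      simp only [Finset.mem_Icc]
      omega
    have hle : ∑ d ∈ (posDiffs A).filter (fun d => d ≤ (T : ℤ)), ((T : ℤ) - d).toNat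
        ≤ ∑ d ∈ Finset.Icc 1 (T : ℤ), ((T : ℤ) - d).toNat :=
      Finset.sum_le_sum_of_subset hsub
    have hcomp : ∑ d ∈ Finset.Icc 1 (T : ℤ), ((T : ℤ) - d).toNat
        = ∑ j ∈ Finset.range T, j := by
      apply Finset.sum_nbij' (i := fun d => ((T : ℤ) - d).toNat) (j := fun j => (T : ℤ) - j)
      · intro d hd
        simp only [Finset.mem_Icc] at hd
        simp only [Finset.mem_range]
        omega
      · intro j hj
        simp only [Finset.mem_range] at hj
        simp only [Finset.mem_Icc]
        omega
      · intro d hd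
        simp only [Finset.mem_Icc] at hd
        omega
      · intro j hj
        simp only [Finset.mem_range] at hj
        omega
      · intro d _; rfl
    calc (∑ d ∈ (posDiffs A).filter (fun d => d ≤ (T : ℤ)), ((T : ℤ) - d).toNat) * 2
        ≤ (∑ j ∈ Finset.range T, j) * 2 := by
          rw [← hcomp]; exact Nat.mul_le_mul_right 2 hle
      _ = T * (T - 1) := Finset.sum_range_id_mul_two T
  -- assemble the key natural-number inequality
  have hS2le : ∑ t ∈ I, (f t) ^ 2 ≤ k * T + T * (T - 1) := by
    rw [hS2, hsplit, hdiag, hsymm2]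
    omega
  -- Cauchy-Schwarz over ℝ
  have hCS : ((k : ℝ) * T) ^ 2 ≤ ((n : ℝ) + T) * (k * T + T * ((T : ℝ) - 1)) := by
    have := sq_sum_le_card_mul_sum_sq (s := I) (f := fun t => ((f t : ℝ)))
    have h1 : (∑ t ∈ I, (f t : ℝ)) = (k : ℝ) * T := by
      rw [← Nat.cast_sum, hsum1]; push_cast; ring
    have h2 : (∑ t ∈ I, (f t : ℝ) ^ 2) ≤ (k : ℝ) * T + T * ((T : ℝ) - 1) := by
      have : (∑ t ∈ I, (f t : ℝ) ^ 2) = ((∑ t ∈ I, (f t) ^ 2 : ℕ) : ℝ) := by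
        push_cast; ring_nf
      rw [this]
      calc ((∑ t ∈ I, (f t) ^ 2 : ℕ) : ℝ) ≤ ((k * T + T * (T - 1) : ℕ) : ℝ) := by
            exact_mod_cast hS2le
        _ = (k : ℝ) * T + T * ((T : ℝ) - 1) := by
            push_cast [Nat.cast_sub hT]; ring
    calc ((k : ℝ) * T) ^ 2 = (∑ t ∈ I, (f t : ℝ)) ^ 2 := by rw [h1]
      _ ≤ (I.card : ℝ) * ∑ t ∈ I, (f t : ℝ) ^ 2 := this
      _ ≤ ((n : ℝ) + T) * ((k : ℝ) * T + T * ((T : ℝ) - 1)) := by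
          rw [hIcard]
          push_cast
          apply mul_le_mul_of_nonneg_left h2
          positivity
  -- final algebra
  have hTpos : (0 : ℝ) < T := by exact_mod_cast hT
  have hc : (0 : ℝ) < (T : ℝ) + (k : ℝ) - 1 := by
    have hk1' : (1 : ℝ) ≤ k := by exact_mod_cast hk1
    linarith
  rw [ge_iff_le, sub_le_iff_le_add, div_le_iff₀ hc]
  have hkey : (k : ℝ) ^ 2 * T * T ≤ ((n : ℝ) + T) * ((T : ℝ) + (k : ℝ) - 1) * T := by
    nlinarith [hCS]
  have := le_of_mul_le_mul_right (by linarith [hkey]) hTpos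
  nlinarith [this]
end
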